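/- (Subcomplex property) For n, r ≥ 1 and 0 ≤ k < n, d S_r^−Λ^k(ℝ^n) ⊆ S_r^−Λ^{k+1}(ℝ^n), i.e., the trimmed serendipity spaces of a fixed order r form a cochain complex under the exterior derivative. -/

import Mathlib

open MvPolynomial

/-- Polynomial differential forms on `ℝ^n`: a family of polynomial coefficients indexed by
subsets `σ ⊆ {1,…,n}`; a `k`-form is supported on sets of cardinality `k`. -/
abbrev PolyForm (n : ℕ) := Finset (Fin n) → MvPolynomial (Fin n) ℝ

/-- The sign `(-1)^{#{j ∈ σ : j < i}}`. -/
noncomputable def sgn {n : ℕ} (σ : Finset (Fin n)) (i : Fin n) : MvPolynomial (Fin n) ℝ :=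
  (-1) ^ (σ.filter (fun j => j < i)).card

/-- The exterior derivative `d`. -/
noncomputable def extD (n : ℕ) : PolyForm n →ₗ[ℝ] PolyForm n where
  toFun ω := fun σ => ∑ i ∈ σ, sgn σ i * pderiv i (ω (σ.erase i))
  map_add' ω η := by
    funext σ
    simp [Pi.add_apply, mul_add, Finset.sum_add_distrib]
  map_smul' c ω := by
    funext σ
    simp [Pi.smul_apply, Finset.smul_sum, mul_smul_comm]

/-- The Koszul operator `κ` (contraction with the position vector field). -/
noncomputable def koszul (n : ℕ) : PolyForm n →ₗ[ℝ] PolyForm n where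
  toFun ω := fun σ => ∑ i ∈ σᶜ, sgn σ i * X i * ω (insert i σ)
  map_add' ω η := by
    funext σ
    simp [Pi.add_apply, mul_add, Finset.sum_add_distrib]
  map_smul' c ω := by
    funext σ
    simp [Pi.smul_apply, Finset.smul_sum, mul_smul_comm]

/-- The space of (polynomial) differential `k`-forms: families supported on index sets of
cardinality `k`. -/
noncomputable def Lambda (n k : ℕ) : Submodule ℝ (PolyForm n) where
  carrier := {ω | ∀ σ, σ.card ≠ k → ω σ = 0}
  zero_mem' := fun σ _ => rfl
  add_mem' := fun ha hb σ h => by simp only [Pi.add_apply, ha σ h, hb σ h, add_zero]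
  smul_mem' := fun c ω h σ hσ => by simp only [Pi.smul_apply, h σ hσ, smul_zero]

/-- The form monomial `x^α dx_σ`. -/
noncomputable def formMonomial {n : ℕ} (α : Fin n →₀ ℕ) (σ : Finset (Fin n)) : PolyForm n :=
  fun τ => if τ = σ then monomial α 1 else 0

/-- The (total) degree `|α|` of a multi-index. -/
def mdeg {n : ℕ} (α : Fin n →₀ ℕ) : ℕ := α.sum fun _ m => m

/-- The linear degree of the form monomial `x^α dx_σ`: the number of `i ∉ σ` with `α i = 1`. -/
def ldeg {n : ℕ} (α : Fin n →₀ ℕ) (σ : Finset (Fin n)) : ℕ :=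
  ((σᶜ).filter fun i => α i = 1).card

/-- `H_rΛ^k(ℝ^n)`: `k`-forms with homogeneous degree-`r` polynomial coefficients. -/
noncomputable def Hspace (n r k : ℕ) : Submodule ℝ (PolyForm n) :=
  Submodule.span ℝ {ω | ∃ α σ, σ.card = k ∧ mdeg α = r ∧ ω = formMonomial α σ}

/-- `P_rΛ^k(ℝ^n)`: `k`-forms with polynomial coefficients of degree at most `r`. -/
noncomputable def Pspace (n r k : ℕ) : Submodule ℝ (PolyForm n) :=
  Submodule.span ℝ {ω | ∃ α σ, σ.card = k ∧ mdeg α ≤ r ∧ ω = formMonomial α σ}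

/-- `H_{r,l}Λ^k(ℝ^n)`: homogeneous degree-`r` `k`-forms of linear degree at least `l`. -/
noncomputable def Hl (n r l k : ℕ) : Submodule ℝ (PolyForm n) :=
  Submodule.span ℝ
    {ω | ∃ α σ, σ.card = k ∧ mdeg α = r ∧ l ≤ ldeg α σ ∧ ω = formMonomial α σ}

/-- `J_rΛ^k(ℝ^n) := Σ_{l ≥ 1} κ H_{r+l-1, l}Λ^{k+1}(ℝ^n)` (here `l` is reindexed as `l+1`). -/
noncomputable def Jspace (n r k : ℕ) : Submodule ℝ (PolyForm n) :=
  ⨆ l : ℕ, Submodule.map (koszul n) (Hl n (r + l) (l + 1) (k + 1))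

/-- The trimmed polynomial space `P_r^-Λ^k := P_{r-1}Λ^k ⊕ κ H_{r-1}Λ^{k+1}`. -/
noncomputable def PminusSpace (n r k : ℕ) : Submodule ℝ (PolyForm n) :=
  Pspace n (r - 1) k ⊔ Submodule.map (koszul n) (Hspace n (r - 1) (k + 1))

/-- The serendipity space `S_rΛ^k := P_rΛ^k + J_rΛ^k + d J_{r+1}Λ^{k-1}`
(the last summand being absent for `k = 0`). -/
noncomputable def Sspace (n r k : ℕ) : Submodule ℝ (PolyForm n) :=
  Pspace n r k ⊔ Jspace n r k ⊔
    (if k = 0 then ⊥ else Submodule.map (extD n) (Jspace n (r + 1) (k - 1)))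

/-- The trimmed serendipity space `S_r^-Λ^k := S_{r-1}Λ^k + κ S_{r-1}Λ^{k+1}`. -/
noncomputable def SminusSpace (n r k : ℕ) : Submodule ℝ (PolyForm n) :=
  Sspace n (r - 1) k ⊔ Submodule.map (koszul n) (Sspace n (r - 1) (k + 1))

/-!
The exterior derivative of `κ ω` is `L ω - κ (d ω)`, where `L = dκ + κd`. By Cartan's homotopy
formula `L` multiplies the form monomial `x^α dx_σ` by `|α| + |σ|`, so it preserves every space
spanned by form monomials and, commuting with `d` and `κ`, also `J_r` and `S_r`. Together with
`d S_rΛ^k ⊆ S_{r-1}Λ^{k+1}` (from `d P_r ⊆ P_{r-1}`, `d J_r` being a summand of `S_{r-1}`, and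
`d ∘ d = 0`) and the monotonicity of `S_r` in `r`, this gives `d S_{r-1}Λ^k ⊆ S_{r-1}Λ^{k+1}` and
`d κ S_{r-1}Λ^{k+1} ⊆ S_{r-1}Λ^{k+1} + κ S_{r-1}Λ^{k+2}`.
-/

lemma pderiv_pderiv_comm {σ R : Type*} [CommSemiring R] (i j : σ) (p : MvPolynomial σ R) :
    pderiv i (pderiv j p) = pderiv j (pderiv i p) := by
  classical
  obtain rfl | hij := eq_or_ne i j
  · rfl
  ext m
  simp only [coeff_pderiv, Finsupp.add_apply, Finsupp.single_apply, if_neg hij,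
    if_neg hij.symm, add_zero, add_right_comm m]
  ring

lemma Finset.sum_sum_erase_eq_zero_of_antisymm {ι M : Type*} [DecidableEq ι] [AddCommGroup M]
    [IsAddTorsionFree M] (s : Finset ι) (F : ι → ι → M)
    (hF : ∀ i ∈ s, ∀ j ∈ s.erase i, F i j = -F j i) :
    ∑ i ∈ s, ∑ j ∈ s.erase i, F i j = 0 := by
  rw [← self_eq_neg]
  calc ∑ i ∈ s, ∑ j ∈ s.erase i, F i j = ∑ i ∈ s, ∑ j ∈ s.erase i, -F j i :=
        Finset.sum_congr rfl fun i hi => Finset.sum_congr rfl (hF i hi)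
    _ = ∑ j ∈ s, ∑ i ∈ s.erase j, -F j i :=
        Finset.sum_comm' fun i j => by simp only [Finset.mem_erase]; tauto
    _ = -∑ j ∈ s, ∑ i ∈ s.erase j, F j i := by simp only [Finset.sum_neg_distrib]

section Signs

variable {n : ℕ}

lemma sgn_eq_C (σ : Finset (Fin n)) (i : Fin n) :
    sgn σ i = C ((-1) ^ (σ.filter (· < i)).card) := by
  simp [sgn]

lemma pderiv_sgn_mul (σ : Finset (Fin n)) (i j : Fin n) (p : MvPolynomial (Fin n) ℝ) :
    pderiv j (sgn σ i * p) = sgn σ i * pderiv j p := by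
  rw [sgn_eq_C, pderiv_C_mul]

lemma sgn_mul_self (σ : Finset (Fin n)) (i : Fin n) : sgn σ i * sgn σ i = 1 := by
  rw [sgn, ← pow_add]
  exact Even.neg_one_pow ⟨_, rfl⟩

lemma sgn_erase_of_not_lt (σ : Finset (Fin n)) {i j : Fin n} (h : ¬ i < j) :
    sgn (σ.erase i) j = sgn σ j := by
  rw [sgn, sgn, Finset.filter_erase, Finset.erase_eq_of_notMem]
  simp [h]

lemma sgn_insert_of_not_lt (σ : Finset (Fin n)) {i j : Fin n} (h : ¬ i < j) :
    sgn (insert i σ) j = sgn σ j := by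
  rw [sgn, sgn, Finset.filter_insert, if_neg h]

lemma sgn_erase_of_lt {σ : Finset (Fin n)} {i j : Fin n} (hi : i ∈ σ) (h : i < j) :
    sgn (σ.erase i) j = -sgn σ j := by
  have hmem : i ∈ σ.filter (· < j) := Finset.mem_filter.mpr ⟨hi, h⟩
  rw [sgn, sgn, Finset.filter_erase, ← Finset.card_erase_add_one hmem, pow_succ]
  ring

lemma sgn_insert_of_lt {σ : Finset (Fin n)} {i j : Fin n} (hi : i ∉ σ) (h : i < j) :
    sgn (insert i σ) j = -sgn σ j := by
  rw [sgn, sgn, Finset.filter_insert, if_pos h,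
    Finset.card_insert_of_notMem fun hc => hi (Finset.mem_filter.mp hc).1, pow_succ]
  ring

lemma sgn_mul_sgn_erase_swap {σ : Finset (Fin n)} {i j : Fin n} (hi : i ∈ σ) (hj : j ∈ σ)
    (hij : i ≠ j) : sgn σ i * sgn (σ.erase i) j = -(sgn σ j * sgn (σ.erase j) i) := by
  rcases hij.lt_or_gt with h | h
  · rw [sgn_erase_of_lt hi h, sgn_erase_of_not_lt σ (asymm h)]; ring
  · rw [sgn_erase_of_not_lt σ (asymm h), sgn_erase_of_lt hj h]; ring

lemma sgn_mul_sgn_insert_swap {σ : Finset (Fin n)} {i j : Fin n} (hi : i ∉ σ) (hj : j ∉ σ)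
    (hij : i ≠ j) : sgn σ i * sgn (insert i σ) j = -(sgn σ j * sgn (insert j σ) i) := by
  rcases hij.lt_or_gt with h | h
  · rw [sgn_insert_of_lt hi h, sgn_insert_of_not_lt σ (asymm h)]; ring
  · rw [sgn_insert_of_not_lt σ (asymm h), sgn_insert_of_lt hj h]; ring

lemma sgn_mul_sgn_erase_eq_neg_insert {σ : Finset (Fin n)} {i j : Fin n} (hi : i ∈ σ)
    (hj : j ∉ σ) : sgn σ i * sgn (σ.erase i) j = -(sgn σ j * sgn (insert j σ) i) := by
  rcases (ne_of_mem_of_not_mem hi hj).lt_or_gt with h | h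
  · rw [sgn_erase_of_lt hi h, sgn_insert_of_not_lt σ (asymm h)]; ring
  · rw [sgn_erase_of_not_lt σ (asymm h), sgn_insert_of_lt hj h]; ring

end Signs

section Operators

variable {n : ℕ}

lemma extD_apply (ω : PolyForm n) (τ : Finset (Fin n)) :
    extD n ω τ = ∑ i ∈ τ, sgn τ i * pderiv i (ω (τ.erase i)) := rfl

lemma koszul_apply (ω : PolyForm n) (τ : Finset (Fin n)) :
    koszul n ω τ = ∑ i ∈ τᶜ, sgn τ i * X i * ω (insert i τ) := rfl

lemma extD_extD (ω : PolyForm n) : extD n (extD n ω) = 0 := by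
  funext τ
  have hτ : extD n (extD n ω) τ = ∑ i ∈ τ, ∑ j ∈ τ.erase i,
      sgn τ i * sgn (τ.erase i) j * pderiv i (pderiv j (ω ((τ.erase i).erase j))) := by
    simp only [extD_apply, map_sum, Finset.mul_sum, pderiv_sgn_mul, mul_assoc]
  rw [hτ, Finset.sum_sum_erase_eq_zero_of_antisymm]
  · rfl
  intro i hi j hj
  rw [Finset.erase_right_comm, pderiv_pderiv_comm, sgn_mul_sgn_erase_swap hi
    (Finset.mem_of_mem_erase hj) (Finset.ne_of_mem_erase hj).symm, neg_mul]

lemma koszul_koszul (ω : PolyForm n) : koszul n (koszul n ω) = 0 := by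
  funext τ
  have hτ : koszul n (koszul n ω) τ = ∑ i ∈ τᶜ, ∑ j ∈ τᶜ.erase i,
      sgn τ i * sgn (insert i τ) j * (X i * X j * ω (insert j (insert i τ))) := by
    simp only [koszul_apply, Finset.compl_insert, Finset.mul_sum]
    refine Finset.sum_congr rfl fun i _ => Finset.sum_congr rfl fun j _ => by ring
  rw [hτ, Finset.sum_sum_erase_eq_zero_of_antisymm]
  · rfl
  intro i hi j hj
  rw [Finset.insert_comm, mul_comm (X i), sgn_mul_sgn_insert_swap (Finset.mem_compl.mp hi)
    (Finset.mem_compl.mp (Finset.mem_of_mem_erase hj)) (Finset.ne_of_mem_erase hj).symm, neg_mul]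

end Operators

section Homotopy

variable {n : ℕ}

lemma extD_koszul_apply (ω : PolyForm n) (τ : Finset (Fin n)) :
    extD n (koszul n ω) τ = τ.card • ω τ + ∑ i ∈ τ, X i * pderiv i (ω τ)
      + ∑ i ∈ τ, ∑ j ∈ τᶜ,
          sgn τ i * sgn (τ.erase i) j * (X j * pderiv i (ω (insert j (τ.erase i)))) := by
  have step : ∀ i ∈ τ, sgn τ i * pderiv i (koszul n ω (τ.erase i))
      = ω τ + X i * pderiv i (ω τ) + ∑ j ∈ τᶜ,
          sgn τ i * sgn (τ.erase i) j * (X j * pderiv i (ω (insert j (τ.erase i)))) := by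
    intro i hi
    rw [koszul_apply, Finset.compl_erase, Finset.sum_insert (by simpa using hi),
      Finset.insert_erase hi, sgn_erase_of_not_lt τ (lt_irrefl i), map_add, mul_add,
      mul_assoc, pderiv_sgn_mul, pderiv_mul, pderiv_X_self, one_mul, ← mul_assoc, sgn_mul_self,
      one_mul, map_sum, Finset.mul_sum]
    congr 1
    refine Finset.sum_congr rfl fun j hj => ?_
    have hji : j ≠ i := (ne_of_mem_of_not_mem hi (Finset.mem_compl.mp hj)).symm
    rw [mul_assoc, pderiv_sgn_mul, pderiv_mul, pderiv_X_of_ne hji]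
    ring
  rw [extD_apply, Finset.sum_congr rfl step, Finset.sum_add_distrib, Finset.sum_add_distrib,
    Finset.sum_const]

lemma koszul_extD_apply (ω : PolyForm n) (τ : Finset (Fin n)) :
    koszul n (extD n ω) τ = ∑ j ∈ τᶜ, X j * pderiv j (ω τ)
      + ∑ j ∈ τᶜ, ∑ i ∈ τ,
          sgn τ j * sgn (insert j τ) i * (X j * pderiv i (ω ((insert j τ).erase i))) := by
  have step : ∀ j ∈ τᶜ, sgn τ j * X j * extD n ω (insert j τ)
      = X j * pderiv j (ω τ) + ∑ i ∈ τ,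
          sgn τ j * sgn (insert j τ) i * (X j * pderiv i (ω ((insert j τ).erase i))) := by
    intro j hj
    have hjτ : j ∉ τ := Finset.mem_compl.mp hj
    rw [extD_apply, Finset.sum_insert hjτ, Finset.erase_insert hjτ, mul_add,
      sgn_insert_of_not_lt τ (lt_irrefl j), Finset.mul_sum]
    congr 1
    · linear_combination (X j * pderiv j (ω τ)) * sgn_mul_self τ j
    · exact Finset.sum_congr rfl fun i _ => by ring
  rw [koszul_apply, Finset.sum_congr rfl step, Finset.sum_add_distrib]

lemma extD_koszul_add_koszul_extD_apply (ω : PolyForm n) (τ : Finset (Fin n)) :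
    extD n (koszul n ω) τ + koszul n (extD n ω) τ
      = ∑ i, X i * pderiv i (ω τ) + τ.card • ω τ := by
  have hcross : ∑ i ∈ τ, ∑ j ∈ τᶜ,
        sgn τ i * sgn (τ.erase i) j * (X j * pderiv i (ω (insert j (τ.erase i))))
      + ∑ j ∈ τᶜ, ∑ i ∈ τ,
        sgn τ j * sgn (insert j τ) i * (X j * pderiv i (ω ((insert j τ).erase i))) = 0 := by
    rw [Finset.sum_comm (s := τᶜ), ← Finset.sum_add_distrib]
    refine Finset.sum_eq_zero fun i hi => ?_
    rw [← Finset.sum_add_distrib]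
    refine Finset.sum_eq_zero fun j hj => ?_
    have hjτ : j ∉ τ := Finset.mem_compl.mp hj
    rw [Finset.erase_insert_of_ne (ne_of_mem_of_not_mem hi hjτ).symm,
      sgn_mul_sgn_erase_eq_neg_insert hi hjτ]
    ring
  rw [extD_koszul_apply, koszul_extD_apply, ← Finset.sum_add_sum_compl τ]
  linear_combination hcross

end Homotopy

section Monomials

variable {n : ℕ}

lemma mdeg_eq_degree (α : Fin n →₀ ℕ) : mdeg α = α.degree := rfl

lemma ldeg_le_mdeg (α : Fin n →₀ ℕ) (σ : Finset (Fin n)) : ldeg α σ ≤ mdeg α := by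
  rw [ldeg, mdeg_eq_degree, Finsupp.degree_eq_sum, Finset.card_eq_sum_ones]
  calc ∑ i ∈ σᶜ with α i = 1, 1 = ∑ i ∈ σᶜ with α i = 1, α i :=
        Finset.sum_congr rfl fun i hi => (Finset.mem_filter.mp hi).2.symm
    _ ≤ ∑ i, α i := Finset.sum_le_sum_of_subset (Finset.subset_univ _)

lemma formMonomial_eq_single (α : Fin n →₀ ℕ) (σ : Finset (Fin n)) :
    formMonomial α σ = Pi.single σ (monomial α 1) :=
  funext fun τ => (Pi.single_apply σ _ τ).symm

lemma sgn_mul_monomial (σ : Finset (Fin n)) (i : Fin n) (α : Fin n →₀ ℕ) (c : ℝ) :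
    sgn σ i * monomial α c = monomial α ((-1) ^ (σ.filter (· < i)).card * c) := by
  rw [sgn_eq_C, C_mul_monomial]

lemma X_mul_monomial (i : Fin n) (α : Fin n →₀ ℕ) (c : ℝ) :
    X i * monomial α c = monomial (α + Finsupp.single i 1) c := by
  rw [X, monomial_mul, one_mul, add_comm]

lemma single_monomial_mem_Pspace {r k : ℕ} {α : Fin n →₀ ℕ} {σ : Finset (Fin n)}
    (hσ : σ.card = k) (hα : mdeg α ≤ r) (c : ℝ) : Pi.single σ (monomial α c) ∈ Pspace n r k := by
  have h : Pi.single σ (monomial α c) = c • formMonomial α σ := by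
    rw [formMonomial_eq_single, ← Pi.single_smul, smul_monomial, smul_eq_mul, mul_one]
  exact h ▸ Submodule.smul_mem _ c (Submodule.subset_span ⟨α, σ, hσ, hα, rfl⟩)

lemma koszul_single (σ : Finset (Fin n)) (p : MvPolynomial (Fin n) ℝ) :
    koszul n (Pi.single σ p) = ∑ i ∈ σ, Pi.single (σ.erase i) (sgn σ i * X i * p) := by
  funext τ
  simp only [koszul_apply, Finset.sum_apply, Pi.single_apply, mul_ite, mul_zero]
  rw [← Finset.sum_filter, ← Finset.sum_filter]
  refine Finset.sum_congr ?_ fun i hi => ?_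
  · ext i
    simp only [Finset.mem_filter, Finset.mem_compl]
    constructor
    · rintro ⟨hi, rfl⟩
      exact ⟨Finset.mem_insert_self i τ, (Finset.erase_insert hi).symm⟩
    · rintro ⟨hi, rfl⟩
      exact ⟨Finset.notMem_erase i σ, Finset.insert_erase hi⟩
  · obtain ⟨-, rfl⟩ := Finset.mem_filter.mp hi
    rw [sgn_erase_of_not_lt σ (lt_irrefl i)]

lemma extD_single (σ : Finset (Fin n)) (p : MvPolynomial (Fin n) ℝ) :
    extD n (Pi.single σ p) = ∑ i ∈ σᶜ, Pi.single (insert i σ) (sgn σ i * pderiv i p) := by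
  funext τ
  simp only [extD_apply, Finset.sum_apply, Pi.single_apply, apply_ite (pderiv _), map_zero,
    mul_ite, mul_zero]
  rw [← Finset.sum_filter, ← Finset.sum_filter]
  refine Finset.sum_congr ?_ fun i hi => ?_
  · ext i
    simp only [Finset.mem_filter, Finset.mem_compl]
    constructor
    · rintro ⟨hi, rfl⟩
      exact ⟨Finset.notMem_erase i τ, (Finset.insert_erase hi).symm⟩
    · rintro ⟨hi, rfl⟩
      exact ⟨Finset.mem_insert_self i σ, Finset.erase_insert hi⟩
  · obtain ⟨hi, rfl⟩ := Finset.mem_filter.mp hi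
    rw [sgn_insert_of_not_lt σ (lt_irrefl i)]

lemma extD_formMonomial_mem (α : Fin n →₀ ℕ) (σ : Finset (Fin n)) :
    extD n (formMonomial α σ) ∈ Pspace n (mdeg α - 1) (σ.card + 1) := by
  rw [formMonomial_eq_single, extD_single]
  refine Submodule.sum_mem _ fun i hi => ?_
  rw [pderiv_monomial, sgn_mul_monomial]
  obtain hαi | hαi := eq_or_ne (α i) 0
  · simp [hαi]
  refine single_monomial_mem_Pspace (Finset.card_insert_of_notMem (Finset.mem_compl.mp hi)) ?_ _
  have := congrArg Finsupp.degree (Finsupp.sub_add_single_one_cancel hαi)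
  rw [map_add, Finsupp.degree_single] at this
  rw [mdeg_eq_degree, mdeg_eq_degree]
  omega

lemma koszul_formMonomial_mem (α : Fin n →₀ ℕ) (σ : Finset (Fin n)) :
    koszul n (formMonomial α σ) ∈ Pspace n (mdeg α + 1) (σ.card - 1) := by
  rw [formMonomial_eq_single, koszul_single]
  refine Submodule.sum_mem _ fun i hi => ?_
  rw [mul_assoc, X_mul_monomial, sgn_mul_monomial]
  refine single_monomial_mem_Pspace (Finset.card_erase_of_mem hi) ?_ _
  rw [mdeg_eq_degree, mdeg_eq_degree, map_add, Finsupp.degree_single]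

end Monomials

section Spaces

variable {n : ℕ}

/-- The Lie derivative along the radial vector field `∑ xᵢ ∂ᵢ`. -/
noncomputable def lieRadial (n : ℕ) : PolyForm n →ₗ[ℝ] PolyForm n :=
  extD n ∘ₗ koszul n + koszul n ∘ₗ extD n

lemma lieRadial_apply (ω : PolyForm n) :
    lieRadial n ω = extD n (koszul n ω) + koszul n (extD n ω) := rfl

lemma extD_koszul_eq (ω : PolyForm n) :
    extD n (koszul n ω) = lieRadial n ω - koszul n (extD n ω) := by
  rw [lieRadial_apply, add_sub_cancel_right]

lemma lieRadial_formMonomial (α : Fin n →₀ ℕ) (σ : Finset (Fin n)) :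
    lieRadial n (formMonomial α σ) = ((mdeg α + σ.card : ℕ) : ℝ) • formMonomial α σ := by
  funext τ
  rw [lieRadial_apply, Pi.add_apply, extD_koszul_add_koszul_extD_apply, Pi.smul_apply]
  by_cases hτ : τ = σ
  · subst hτ
    simp only [formMonomial, if_true, (isHomogeneous_monomial (1 : ℝ) rfl).sum_X_mul_pderiv]
    rw [← add_nsmul, Nat.cast_smul_eq_nsmul, mdeg_eq_degree]
  · simp [formMonomial, hτ]

lemma lieRadial_extD (ω : PolyForm n) : lieRadial n (extD n ω) = extD n (lieRadial n ω) := by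
  rw [lieRadial_apply, lieRadial_apply, map_add, extD_extD, extD_extD, map_zero, zero_add,
    add_zero]

lemma lieRadial_koszul (ω : PolyForm n) :
    lieRadial n (koszul n ω) = koszul n (lieRadial n ω) := by
  rw [lieRadial_apply, lieRadial_apply, map_add, koszul_koszul, koszul_koszul, map_zero, zero_add,
    add_zero]

lemma map_lieRadial_span_le {s : Set (PolyForm n)}
    (hs : ∀ ω ∈ s, ∃ α σ, ω = formMonomial α σ) :
    (Submodule.span ℝ s).map (lieRadial n) ≤ Submodule.span ℝ s := by
  rw [Submodule.map_span_le]
  intro ω hω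
  obtain ⟨α, σ, rfl⟩ := hs ω hω
  rw [lieRadial_formMonomial]
  exact Submodule.smul_mem _ _ (Submodule.subset_span hω)

lemma map_lieRadial_map_extD_le {p : Submodule ℝ (PolyForm n)}
    (hp : p.map (lieRadial n) ≤ p) : (p.map (extD n)).map (lieRadial n) ≤ p.map (extD n) := by
  rintro _ ⟨_, ⟨ω, hω, rfl⟩, rfl⟩
  rw [lieRadial_extD]
  exact Submodule.mem_map_of_mem (hp (Submodule.mem_map_of_mem hω))

lemma map_lieRadial_map_koszul_le {p : Submodule ℝ (PolyForm n)}
    (hp : p.map (lieRadial n) ≤ p) : (p.map (koszul n)).map (lieRadial n) ≤ p.map (koszul n) := by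
  rintro _ ⟨_, ⟨ω, hω, rfl⟩, rfl⟩
  rw [lieRadial_koszul]
  exact Submodule.mem_map_of_mem (hp (Submodule.mem_map_of_mem hω))

lemma map_lieRadial_Pspace_le (r k : ℕ) : (Pspace n r k).map (lieRadial n) ≤ Pspace n r k :=
  map_lieRadial_span_le (by rintro ω ⟨α, σ, -, -, rfl⟩; exact ⟨α, σ, rfl⟩)

lemma map_lieRadial_Hl_le (r l k : ℕ) : (Hl n r l k).map (lieRadial n) ≤ Hl n r l k :=
  map_lieRadial_span_le (by rintro ω ⟨α, σ, -, -, -, rfl⟩; exact ⟨α, σ, rfl⟩)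

lemma map_lieRadial_Jspace_le (r k : ℕ) : (Jspace n r k).map (lieRadial n) ≤ Jspace n r k := by
  rw [Jspace, Submodule.map_iSup]
  exact iSup_mono fun l => map_lieRadial_map_koszul_le (map_lieRadial_Hl_le _ _ _)

lemma map_lieRadial_Sspace_le (r k : ℕ) : (Sspace n r k).map (lieRadial n) ≤ Sspace n r k := by
  rw [Sspace, Submodule.map_sup, Submodule.map_sup]
  refine sup_le_sup (sup_le_sup (map_lieRadial_Pspace_le r k) (map_lieRadial_Jspace_le r k)) ?_
  split_ifs
  · rw [Submodule.map_bot]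
  · exact map_lieRadial_map_extD_le (map_lieRadial_Jspace_le _ _)

lemma Pspace_mono {r r' k : ℕ} (h : r ≤ r') : Pspace n r k ≤ Pspace n r' k :=
  Submodule.span_mono (by rintro ω ⟨α, σ, hσ, hα, rfl⟩; exact ⟨α, σ, hσ, hα.trans h, rfl⟩)

lemma Hl_anti {r l l' k : ℕ} (h : l' ≤ l) : Hl n r l k ≤ Hl n r l' k :=
  Submodule.span_mono (by rintro ω ⟨α, σ, hσ, hα, hl, rfl⟩; exact ⟨α, σ, hσ, hα, h.trans hl, rfl⟩)

lemma Hl_le_Pspace (r l k : ℕ) : Hl n r l k ≤ Pspace n r k :=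
  Submodule.span_mono (by rintro ω ⟨α, σ, hσ, hα, -, rfl⟩; exact ⟨α, σ, hσ, hα.le, rfl⟩)

lemma Hl_eq_bot_of_lt {r l k : ℕ} (h : r < l) : Hl n r l k = ⊥ := by
  rw [Hl, Submodule.span_eq_bot]
  rintro ω ⟨α, σ, -, hα, hl, -⟩
  exact absurd ((hl.trans (ldeg_le_mdeg α σ)).trans_eq hα) h.not_ge

lemma Jspace_zero (k : ℕ) : Jspace n 0 k = ⊥ := by
  simp only [Jspace, Hl_eq_bot_of_lt (Nat.lt_succ_of_le (Nat.zero_add _).le), Submodule.map_bot,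
    iSup_bot]

lemma map_extD_Pspace_le (r k : ℕ) : (Pspace n r k).map (extD n) ≤ Pspace n (r - 1) (k + 1) := by
  rw [Pspace, Submodule.map_span_le]
  rintro ω ⟨α, σ, rfl, hα, rfl⟩
  exact Pspace_mono (Nat.sub_le_sub_right hα 1) (extD_formMonomial_mem α σ)

lemma map_koszul_Pspace_le (r k : ℕ) :
    (Pspace n r (k + 1)).map (koszul n) ≤ Pspace n (r + 1) k := by
  rw [Pspace, Submodule.map_span_le]
  rintro ω ⟨α, σ, hσ, hα, rfl⟩
  have hk : k = σ.card - 1 := by omega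
  exact hk ▸ Pspace_mono (Nat.add_le_add_right hα 1) (koszul_formMonomial_mem α σ)

lemma extD_koszul_mem_Pspace {r k : ℕ} {z : PolyForm n} (hz : z ∈ Pspace n (r + 1) k) :
    extD n (koszul n z) ∈ Pspace n (r + 1) k := by
  have hdz : extD n z ∈ Pspace n r (k + 1) :=
    map_extD_Pspace_le (r + 1) k (Submodule.mem_map_of_mem hz)
  rw [extD_koszul_eq]
  exact sub_mem (map_lieRadial_Pspace_le _ _ (Submodule.mem_map_of_mem hz))
    (map_koszul_Pspace_le r k (Submodule.mem_map_of_mem hdz))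

lemma map_extD_Jspace_le (r k : ℕ) :
    (Jspace n (r + 1) k).map (extD n) ≤ Sspace n (r + 1) (k + 1) := by
  rw [Jspace, Submodule.map_iSup]
  refine iSup_le fun l => ?_
  rcases l with _ | m
  · rintro _ ⟨_, ⟨z, hz, rfl⟩, rfl⟩
    exact Submodule.mem_sup_left (Submodule.mem_sup_left
      (extD_koszul_mem_Pspace (Hl_le_Pspace _ _ _ hz)))
  · -- the `l = m + 1` summand of `J_{r+1}` lies in the `l = m` summand of `J_{r+2}`
    have hJ : (Hl n (r + 1 + (m + 1)) (m + 1 + 1) (k + 1)).map (koszul n)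
        ≤ Jspace n (r + 1 + 1) k := by
      refine le_iSup_of_le m (Submodule.map_mono ?_)
      rw [show r + 1 + (m + 1) = r + 1 + 1 + m by omega]
      exact Hl_anti (Nat.le_succ _)
    rw [Sspace, if_neg k.succ_ne_zero, Nat.add_sub_cancel]
    exact (Submodule.map_mono hJ).trans le_sup_right

lemma Sspace_le_succ (r k : ℕ) : Sspace n r k ≤ Sspace n (r + 1) k := by
  have hJ : Jspace n r k ≤ Sspace n (r + 1) k := by
    refine iSup_le fun l => ?_
    rcases l with _ | m
    · refine le_trans ?_ (le_sup_left.trans le_sup_left)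
      exact (Submodule.map_mono (Hl_le_Pspace _ _ _)).trans (map_koszul_Pspace_le r k)
    · refine le_trans ?_ (le_sup_right.trans le_sup_left)
      refine le_iSup_of_le m (Submodule.map_mono ?_)
      rw [show r + (m + 1) = r + 1 + m by omega]
      exact Hl_anti (Nat.le_succ _)
  refine sup_le (sup_le ((Pspace_mono r.le_succ).trans (le_sup_left.trans le_sup_left)) hJ) ?_
  split_ifs with hk
  · exact bot_le
  · obtain ⟨k, rfl⟩ := Nat.exists_eq_succ_of_ne_zero hk
    exact map_extD_Jspace_le r k

lemma Sspace_mono {r r' k : ℕ} (h : r ≤ r') : Sspace n r k ≤ Sspace n r' k :=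
  monotone_nat_of_le_succ (fun r => Sspace_le_succ r k) h

lemma map_extD_Sspace_le (r k : ℕ) : (Sspace n r k).map (extD n) ≤ Sspace n (r - 1) (k + 1) := by
  rw [Sspace, Submodule.map_sup, Submodule.map_sup]
  refine sup_le (sup_le ?_ ?_) ?_
  · exact (map_extD_Pspace_le r k).trans (le_sup_left.trans le_sup_left)
  · rcases r with _ | r
    · rw [Jspace_zero, Submodule.map_bot]
      exact bot_le
    · rw [Nat.add_sub_cancel, Sspace, if_neg k.succ_ne_zero, Nat.add_sub_cancel]
      exact le_sup_right
  · split_ifs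
    · rw [Submodule.map_bot]
      exact bot_le
    · rintro _ ⟨_, ⟨ω, -, rfl⟩, rfl⟩
      rw [extD_extD]
      exact zero_mem _

end Spaces

theorem Sminus_subcomplex_general (n r k : ℕ) :
    Submodule.map (extD n) (SminusSpace n r k) ≤ SminusSpace n r (k + 1) := by
  rw [SminusSpace, Submodule.map_sup]
  refine sup_le ?_ ?_
  · exact ((map_extD_Sspace_le (r - 1) k).trans (Sspace_mono (Nat.sub_le _ _))).trans le_sup_left
  · rintro _ ⟨_, ⟨z, hz, rfl⟩, rfl⟩
    have hLz : lieRadial n z ∈ Sspace n (r - 1) (k + 1) :=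
      map_lieRadial_Sspace_le _ _ (Submodule.mem_map_of_mem hz)
    have hdz : extD n z ∈ Sspace n (r - 1) (k + 1 + 1) :=
      Sspace_mono (Nat.sub_le _ _) (map_extD_Sspace_le _ _ (Submodule.mem_map_of_mem hz))
    rw [extD_koszul_eq]
    exact sub_mem (Submodule.mem_sup_left hLz)
      (Submodule.mem_sup_right (Submodule.mem_map_of_mem hdz))

/-- subcomplex property `d S_r^-Λ^k(ℝ^n) ⊆ S_r^-Λ^{k+1}(ℝ^n)`. -/
theorem Sminus_subcomplex (n r k : ℕ) (hn : 1 ≤ n) (hr : 1 ≤ r) (hk : k < n) :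
    Submodule.map (extD n) (SminusSpace n r k) ≤ SminusSpace n r (k + 1) :=
  Sminus_subcomplex_general n r k
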